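/- (Theorem 7.) Let q be real with 0 < q < 1, α ≥ 1 an integer, d an odd positive integer, χ a Dirichlet character modulo d, x > 0 real, and s ∈ ℂ. Then L_q^χ(s, x | α) = ( [2:q] / ( [2:q^d] · [d:q^α]^s ) ) · Σ_{l=0}^{d−1} (−1)^l χ(l) q^l · ζ̃_{E,q^d}( s, (x+l)/d | α ). -/

import Mathlib

open scoped BigOperators

/-- `[x:q] = (q^x - 1)/(q - 1)` with real exponentiation. -/
noncomputable def qNum (q x : ℝ) : ℝ := (q ^ x - 1) / (q - 1)

/-- Weighted `q`-Euler Hurwitz zeta function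
`ζ̃_{E,q}(s,y|α) = [2:q] ∑_{m≥0} (-1)^m q^m [m+y:q^α]^{-s}`. -/
noncomputable def qHurwitzZeta (q : ℝ) (α : ℕ) (s : ℂ) (y : ℝ) : ℂ :=
  (qNum q 2 : ℂ) *
    ∑' m : ℕ, (-1 : ℂ) ^ m * (q : ℂ) ^ m *
      ((qNum (q ^ α) ((m : ℝ) + y) : ℝ) : ℂ) ^ (-s)

/-- Dirichlet `q`-`L`-function
`L_q^χ(s,x|α) = [2:q] ∑_{m≥0} q^m χ(m) (-1)^m [x+m:q^α]^{-s}`. -/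
noncomputable def qLfun (q : ℝ) (d : ℕ) (χ : DirichletCharacter ℂ d) (α : ℕ)
    (s : ℂ) (x : ℝ) : ℂ :=
  (qNum q 2 : ℂ) *
    ∑' m : ℕ, (q : ℂ) ^ m * χ (m : ZMod d) * (-1 : ℂ) ^ m *
      ((qNum (q ^ α) (x + (m : ℝ)) : ℝ) : ℂ) ^ (-s)

/-! Write `m = l + d n` with `l < d`. Then `χ m = χ l`, `q ^ m = q ^ l (q ^ d) ^ n`, and, as `d` is
odd, `(-1) ^ m = (-1) ^ l (-1) ^ n`; moreover the `q`-numbers factor as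
`[x + m : q ^ α] = [d : q ^ α] [n + (x + l) / d : (q ^ d) ^ α]`. Summing the absolutely
convergent series for `L_q^χ` by residue classes modulo `d`, each class is a multiple of
`ζ̃_{E,q^d}(s, (x + l) / d | α)`. -/

open Finset

theorem tsum_eq_sum_range_tsum_add_mul {R : Type*} [AddCommGroup R] [UniformSpace R]
    [IsUniformAddGroup R] [CompleteSpace R] [T0Space R] {f : ℕ → R} (hf : Summable f)
    {d : ℕ} (hd : 0 < d) :
    ∑' m, f m = ∑ l ∈ range d, ∑' n, f (l + d * n) := by
  have : NeZero d := ⟨hd.ne'⟩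
  rw [Nat.sumByResidueClasses hf d]
  exact sum_nbij' (fun j => j.val) (fun l => (l : ZMod d))
    (fun j _ => by simpa using ZMod.val_lt j) (fun _ _ => mem_univ _)
    (fun j _ => ZMod.natCast_zmod_val j) (fun l hl => ZMod.val_natCast_of_lt (by simpa using hl))
    (fun _ _ => rfl)

section qNum

variable {Q : ℝ}

theorem qNum_eq_one_sub_div (y : ℝ) : qNum Q y = (1 - Q ^ y) / (1 - Q) := by
  rw [qNum, ← neg_div_neg_eq, neg_sub, neg_sub]

theorem qNum_natCast_mul (hQ0 : 0 < Q) (hQ1 : Q ≠ 1) {d : ℕ} (hd : d ≠ 0) (y : ℝ) :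
    qNum Q (d * y) = qNum Q d * qNum (Q ^ d) y := by
  have hQd : Q ^ d - 1 ≠ 0 := sub_ne_zero.2 ((pow_eq_one_iff_of_nonneg hQ0.le hd).not.2 hQ1)
  have hQ : Q - 1 ≠ 0 := sub_ne_zero.2 hQ1
  rw [qNum, qNum, qNum, Real.rpow_mul hQ0.le, Real.rpow_natCast]
  field_simp

variable (hQ0 : 0 < Q) (hQ1 : Q < 1)
include hQ0 hQ1

theorem qNum_pos {y : ℝ} (hy : 0 < y) : 0 < qNum Q y := by
  rw [qNum_eq_one_sub_div]
  exact div_pos (sub_pos.2 (Real.rpow_lt_one hQ0.le hQ1 hy)) (sub_pos.2 hQ1)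

theorem qNum_monotone : Monotone (qNum Q) := fun a b hab => by
  rw [qNum_eq_one_sub_div, qNum_eq_one_sub_div]
  have := Real.rpow_le_rpow_of_exponent_ge hQ0 hQ1.le hab
  exact div_le_div_of_nonneg_right (by linarith) (sub_pos.2 hQ1).le

theorem qNum_le_inv_one_sub (y : ℝ) : qNum Q y ≤ (1 - Q)⁻¹ := by
  rw [qNum_eq_one_sub_div, ← one_div]
  have := Real.rpow_nonneg hQ0.le y
  exact div_le_div_of_nonneg_right (by linarith) (sub_pos.2 hQ1).le

theorem exists_norm_cpow_qNum_le {x : ℝ} (hx : 0 < x) (s : ℂ) :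
    ∃ C, ∀ y, x ≤ y → ‖((qNum Q y : ℝ) : ℂ) ^ s‖ ≤ C := by
  refine ⟨max (qNum Q x ^ s.re) ((1 - Q)⁻¹ ^ s.re), fun y hy => ?_⟩
  have hpos : 0 < qNum Q y := qNum_pos hQ0 hQ1 (hx.trans_le hy)
  rw [Complex.norm_cpow_eq_rpow_re_of_pos hpos]
  rcases le_total 0 s.re with hs | hs
  · exact le_max_of_le_right (Real.rpow_le_rpow hpos.le (qNum_le_inv_one_sub hQ0 hQ1 y) hs)
  · exact le_max_of_le_left
      (Real.rpow_le_rpow_of_nonpos (qNum_pos hQ0 hQ1 hx) (qNum_monotone hQ0 hQ1 hy) hs)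

end qNum

noncomputable def qHurwitzZetaTerm (q : ℝ) (α : ℕ) (s : ℂ) (y : ℝ) (m : ℕ) : ℂ :=
  (-1 : ℂ) ^ m * (q : ℂ) ^ m * ((qNum (q ^ α) ((m : ℝ) + y) : ℝ) : ℂ) ^ (-s)

noncomputable def qLfunTerm (q : ℝ) (d : ℕ) (χ : DirichletCharacter ℂ d) (α : ℕ)
    (s : ℂ) (x : ℝ) (m : ℕ) : ℂ :=
  (q : ℂ) ^ m * χ (m : ZMod d) * (-1 : ℂ) ^ m *
    ((qNum (q ^ α) (x + (m : ℝ)) : ℝ) : ℂ) ^ (-s)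

theorem qHurwitzZeta_eq_tsum (q : ℝ) (α : ℕ) (s : ℂ) (y : ℝ) :
    qHurwitzZeta q α s y = qNum q 2 * ∑' m, qHurwitzZetaTerm q α s y m := rfl

theorem qLfun_eq_tsum (q : ℝ) (d : ℕ) (χ : DirichletCharacter ℂ d) (α : ℕ) (s : ℂ) (x : ℝ) :
    qLfun q d χ α s x = qNum q 2 * ∑' m, qLfunTerm q d χ α s x m := rfl

section

variable {q : ℝ} (hq0 : 0 < q) (hq1 : q < 1) {α : ℕ} (hα : α ≠ 0)
  {d : ℕ} (χ : DirichletCharacter ℂ d) {x : ℝ} (hx : 0 < x) (s : ℂ)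
include hq0 hq1 hα hx

theorem summable_qLfunTerm : Summable (qLfunTerm q d χ α s x) := by
  have hQ1 : q ^ α < 1 := pow_lt_one₀ hq0.le hq1 hα
  obtain ⟨C, hC⟩ := exists_norm_cpow_qNum_le (pow_pos hq0 α) hQ1 hx (-s)
  refine Summable.of_norm_bounded ((summable_geometric_of_lt_one hq0.le hq1).mul_left C)
    fun m => ?_
  have hχ : ‖χ (m : ZMod d)‖ ≤ 1 := χ.norm_le_one _
  calc ‖qLfunTerm q d χ α s x m‖
      = q ^ m * ‖χ (m : ZMod d)‖ * ‖((qNum (q ^ α) (x + m) : ℝ) : ℂ) ^ (-s)‖ := by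
        simp [qLfunTerm, abs_of_pos hq0]
    _ ≤ q ^ m * 1 * C := by
        gcongr
        exact hC _ (le_add_of_nonneg_right m.cast_nonneg)
    _ = C * q ^ m := by ring

theorem qLfunTerm_add_mul (hd : Odd d) (l n : ℕ) :
    qLfunTerm q d χ α s x (l + d * n) =
      (-1 : ℂ) ^ l * χ (l : ZMod d) * (q : ℂ) ^ l * ((qNum (q ^ α) d : ℝ) : ℂ) ^ (-s) *
        qHurwitzZetaTerm (q ^ d) α s ((x + l) / d) n := by
  have hd0 : (d : ℝ) ≠ 0 := Nat.cast_ne_zero.2 hd.pos.ne'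
  have hQ0 : 0 < q ^ α := pow_pos hq0 α
  have hQ1 : q ^ α < 1 := pow_lt_one₀ hq0.le hq1 hα
  have hR0 : 0 < (q ^ d) ^ α := pow_pos (pow_pos hq0 d) α
  have hR1 : (q ^ d) ^ α < 1 :=
    pow_lt_one₀ (pow_pos hq0 d).le (pow_lt_one₀ hq0.le hq1 hd.pos.ne') hα
  have hχ : ((l + d * n : ℕ) : ZMod d) = l := by simp
  have hsign : (-1 : ℂ) ^ (l + d * n) = (-1) ^ l * (-1) ^ n := by
    rw [pow_add, pow_mul, hd.neg_one_pow]
  have harg : qNum (q ^ α) (x + (l + d * n : ℕ)) =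
      qNum (q ^ α) d * qNum ((q ^ d) ^ α) (n + (x + l) / d) := by
    rw [← pow_mul, mul_comm d α, pow_mul, ← qNum_natCast_mul hQ0 hQ1.ne hd.pos.ne']
    congr 1
    field_simp
    push_cast
    ring
  have hD : 0 < qNum (q ^ α) d := qNum_pos hQ0 hQ1 (Nat.cast_pos.2 hd.pos)
  have hH : 0 < qNum ((q ^ d) ^ α) (n + (x + l) / d) := qNum_pos hR0 hR1 (by positivity)
  rw [qLfunTerm, qHurwitzZetaTerm, hχ, hsign, harg, Complex.ofReal_mul,
    Complex.mul_cpow_ofReal_nonneg hD.le hH.le]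
  push_cast
  ring

end

theorem statement13_general (q : ℝ) (hq0 : 0 < q) (hq1 : q < 1) (α : ℕ) (hα : 1 ≤ α)
    (d : ℕ) (hdo : Odd d) (χ : DirichletCharacter ℂ d)
    (x : ℝ) (hx : 0 < x) (s : ℂ) :
    qLfun q d χ α s x =
      ((qNum q 2 : ℝ) : ℂ) /
          (((qNum (q ^ d) 2 : ℝ) : ℂ) * ((qNum (q ^ α) d : ℝ) : ℂ) ^ s) *
        ∑ l ∈ Finset.range d,
          (-1 : ℂ) ^ l * χ (l : ZMod d) * (q : ℂ) ^ l *
            qHurwitzZeta (q ^ d) α s ((x + l) / d) := by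
  have hα0 : α ≠ 0 := by omega
  have hD : 0 < qNum (q ^ α) d :=
    qNum_pos (pow_pos hq0 α) (pow_lt_one₀ hq0.le hq1 hα0) (Nat.cast_pos.2 hdo.pos)
  have h2 : ((qNum (q ^ d) 2 : ℝ) : ℂ) ≠ 0 := Complex.ofReal_ne_zero.2
    (qNum_pos (pow_pos hq0 d) (pow_lt_one₀ hq0.le hq1 hdo.pos.ne') two_pos).ne'
  rw [qLfun_eq_tsum,
    tsum_eq_sum_range_tsum_add_mul (summable_qLfunTerm hq0 hq1 hα0 χ hx s) hdo.pos, mul_sum,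
    mul_sum]
  refine sum_congr rfl fun l _ => ?_
  simp_rw [qLfunTerm_add_mul hq0 hq1 hα0 χ hx s hdo, tsum_mul_left, qHurwitzZeta_eq_tsum,
    Complex.cpow_neg]
  have : ((qNum (q ^ α) d : ℝ) : ℂ) ^ s ≠ 0 :=
    Complex.cpow_ne_zero_iff.2 (Or.inl (Complex.ofReal_ne_zero.2 hD.ne'))
  field_simp

theorem statement13 (q : ℝ) (hq0 : 0 < q) (hq1 : q < 1) (α : ℕ) (hα : 1 ≤ α)
    (d : ℕ) (hd0 : 0 < d) (hdo : Odd d) (χ : DirichletCharacter ℂ d)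
    (x : ℝ) (hx : 0 < x) (s : ℂ) :
    qLfun q d χ α s x =
      ((qNum q 2 : ℝ) : ℂ) /
          (((qNum (q ^ d) 2 : ℝ) : ℂ) * ((qNum (q ^ α) d : ℝ) : ℂ) ^ s) *
        ∑ l ∈ Finset.range d,
          (-1 : ℂ) ^ l * χ (l : ZMod d) * (q : ℂ) ^ l *
            qHurwitzZeta (q ^ d) α s ((x + l) / d) :=
  statement13_general q hq0 hq1 α hα d hdo χ x hx s
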